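/- arXiv:1902.07670 — 2 statements merged into one kernel-verified Lean document; each statement's English description precedes it below -/
import Mathlib

section
/- Let H ∈ ℂ^{J×M} have rows in the column span of H_t ∈ ℂ^{M×L}, and let F = F₁ + F₂ be the orthogonal decomposition of F ∈ ℂ^{M×Q} into components with columns in the span of H_t and its orthogonal complement, respectively. Then for any γ > 0, det(I_J + γ H F F^H H^H) = det(I_J + γ H F₁ F₁^H H^H), and ‖F‖_F ≥ ‖F₁‖_F. -/
/-!
Since `Htᴴ * F₂ = 0` and the rows of `H` lie in the column span of `Ht`, `H * F = H * F₁`, and the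
Gram matrix `H F Fᴴ Hᴴ = (H F)(H F)ᴴ` only sees `H F`. For the norms, `F₁ᴴ * F₂ = Cᴴ (Htᴴ F₂) = 0`,
so the cross terms of `trace ((F₁ + F₂)ᴴ (F₁ + F₂))` vanish and `‖F‖_F² = ‖F₁‖_F² + ‖F₂‖_F²`.
-/

open Matrix

noncomputable def frobeniusNorm {m n : Type*} [Fintype m] [Fintype n]
    (A : Matrix m n ℂ) : ℝ :=
  Real.sqrt (∑ i, ∑ j, ‖A i j‖ ^ 2)

theorem Matrix.mul_mul_conjTranspose_mul_conjTranspose {R m k n : Type*} [Fintype k] [Fintype n]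
    [NonUnitalSemiring R] [StarRing R] (H : Matrix m k R) (F : Matrix k n R) :
    H * F * Fᴴ * Hᴴ = H * F * (H * F)ᴴ := by
  rw [conjTranspose_mul, Matrix.mul_assoc (H * F)]

section

variable {m n : Type*} [Fintype m] [Fintype n]

theorem frobeniusNorm_nonneg (A : Matrix m n ℂ) : 0 ≤ frobeniusNorm A := Real.sqrt_nonneg _

theorem frobeniusNorm_sq (A : Matrix m n ℂ) :
    frobeniusNorm A ^ 2 = (Aᴴ * A).trace.re := by
  rw [frobeniusNorm, Real.sq_sqrt (by positivity), Finset.sum_comm]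
  simp [trace, mul_apply, Complex.conj_mul', Complex.re_sum, ← Complex.ofReal_pow]

theorem frobeniusNorm_add_sq_of_conjTranspose_mul_eq_zero {A B : Matrix m n ℂ}
    (h : Aᴴ * B = 0) :
    frobeniusNorm (A + B) ^ 2 = frobeniusNorm A ^ 2 + frobeniusNorm B ^ 2 := by
  have h' : Bᴴ * A = 0 := by
    rw [← conjTranspose_conjTranspose A, ← conjTranspose_mul, h, conjTranspose_zero]
  rw [frobeniusNorm_sq, frobeniusNorm_sq, frobeniusNorm_sq, conjTranspose_add, Matrix.add_mul,
    Matrix.mul_add, Matrix.mul_add, h, h', add_zero, zero_add, trace_add, Complex.add_re]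

theorem frobeniusNorm_le_frobeniusNorm_add_of_conjTranspose_mul_eq_zero {A B : Matrix m n ℂ}
    (h : Aᴴ * B = 0) : frobeniusNorm A ≤ frobeniusNorm (A + B) := by
  refine (pow_le_pow_iff_left₀ (frobeniusNorm_nonneg _) (frobeniusNorm_nonneg _) two_ne_zero).1 ?_
  rw [frobeniusNorm_add_sq_of_conjTranspose_mul_eq_zero h]
  exact le_add_of_nonneg_right (sq_nonneg _)

end

theorem rate_invariance_norm_reduction_general {J M L Q : ℕ}
    (Ht : Matrix (Fin M) (Fin L) ℂ) (A : Matrix (Fin J) (Fin L) ℂ)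
    (H : Matrix (Fin J) (Fin M) ℂ) (hH : H = A * Htᴴ)
    (F F₁ F₂ : Matrix (Fin M) (Fin Q) ℂ) (hF : F = F₁ + F₂)
    (C : Matrix (Fin L) (Fin Q) ℂ) (hF₁ : F₁ = Ht * C)
    (hF₂ : Htᴴ * F₂ = 0)
    (γ : ℝ) :
    (1 + (γ : ℂ) • (H * F * Fᴴ * Hᴴ)).det = (1 + (γ : ℂ) • (H * F₁ * F₁ᴴ * Hᴴ)).det ∧
    frobeniusNorm F₁ ≤ frobeniusNorm F := by
  have hHF : H * F = H * F₁ := by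
    rw [hF, Matrix.mul_add, hH, Matrix.mul_assoc A Htᴴ F₂, hF₂, Matrix.mul_zero, add_zero]
  have horth : F₁ᴴ * F₂ = 0 := by
    rw [hF₁, conjTranspose_mul, Matrix.mul_assoc, hF₂, Matrix.mul_zero]
  refine ⟨?_, hF ▸ frobeniusNorm_le_frobeniusNorm_add_of_conjTranspose_mul_eq_zero horth⟩
  rw [mul_mul_conjTranspose_mul_conjTranspose, mul_mul_conjTranspose_mul_conjTranspose, hHF]

/-- Rate invariance and norm reduction: with rows of H in the column span of H_t and the
orthogonal decomposition F = F₁ + F₂, det(I + γ H F Fᴴ Hᴴ) = det(I + γ H F₁ F₁ᴴ Hᴴ)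
and ‖F‖_F ≥ ‖F₁‖_F. -/
theorem rate_invariance_norm_reduction {J M L Q : ℕ}
    (Ht : Matrix (Fin M) (Fin L) ℂ) (A : Matrix (Fin J) (Fin L) ℂ)
    (H : Matrix (Fin J) (Fin M) ℂ) (hH : H = A * Htᴴ)
    (F F₁ F₂ : Matrix (Fin M) (Fin Q) ℂ) (hF : F = F₁ + F₂)
    (C : Matrix (Fin L) (Fin Q) ℂ) (hF₁ : F₁ = Ht * C)
    (hF₂ : Htᴴ * F₂ = 0)
    (γ : ℝ) (hγ : 0 < γ) :
    (1 + (γ : ℂ) • (H * F * Fᴴ * Hᴴ)).det = (1 + (γ : ℂ) • (H * F₁ * F₁ᴴ * Hᴴ)).det ∧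
    frobeniusNorm F₁ ≤ frobeniusNorm F :=
  rate_invariance_norm_reduction_general Ht A H hH F F₁ F₂ hF C hF₁ hF₂ γ
end

section
/- For a diagonal matrix D ∈ ℂ^{M×M} with unit-modulus diagonal entries and any matrices T ∈ ℂ^{M×N}, B ∈ ℂ^{N×Q}, and full-rank channel factorization H = A H_t^H with A ∈ ℂ^{J×L}, the achievable rate R(F) = log₂ det(I_J + γ H F F^H H^H) is unchanged when F = D T B is replaced by its projection onto the column space of H_t. -/
open Matrix

/-! Since `H = A H_tᴴ` and `H_tᴴ P = H_tᴴ` for the orthogonal projector `P = H_t (H_tᴴ H_t)⁻¹ H_tᴴ`,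
the effective channel `H F` is unchanged by projecting `F`; the rate depends on `F` only through
the Gram matrix `(H F)(H F)ᴴ`. -/

namespace Matrix

variable {m n : Type*} [Fintype m] [Fintype n] [DecidableEq n]
  {R : Type*} [CommRing R]

theorem mul_mul_mul_nonsing_inv_mul_self {X : Matrix m n R} {Y : Matrix n m R}
    (h : IsUnit (Y * X)) : Y * (X * (Y * X)⁻¹ * Y) = Y := by
  rw [← Matrix.mul_assoc, ← Matrix.mul_assoc,
    mul_nonsing_inv _ ((isUnit_iff_isUnit_det _).mp h), Matrix.one_mul]

end Matrix

theorem rate_unchanged_projection_general {J M L Q : ℕ}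
    (Ht : Matrix (Fin M) (Fin L) ℂ) (A : Matrix (Fin J) (Fin L) ℂ)
    (hinv : IsUnit (Htᴴ * Ht))
    (H : Matrix (Fin J) (Fin M) ℂ) (hH : H = A * Htᴴ)
    (γ : ℝ)
    (F F₁ : Matrix (Fin M) (Fin Q) ℂ)
    (hF₁ : F₁ = Ht * (Htᴴ * Ht)⁻¹ * Htᴴ * F) :
    Real.logb 2 ‖(1 + (γ : ℂ) • (H * F * Fᴴ * Hᴴ)).det‖
      = Real.logb 2 ‖(1 + (γ : ℂ) • (H * F₁ * F₁ᴴ * Hᴴ)).det‖ := by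
  have hchannel : H * F₁ = H * F := by
    rw [hF₁, hH, ← Matrix.mul_assoc, Matrix.mul_assoc A, mul_mul_mul_nonsing_inv_mul_self hinv]
  have hgram (G : Matrix (Fin M) (Fin Q) ℂ) : H * G * Gᴴ * Hᴴ = (H * G) * (H * G)ᴴ := by
    rw [conjTranspose_mul, Matrix.mul_assoc (H * G)]
  rw [hgram, hgram, hchannel]

/-- For F = D T B with D a unit-modulus diagonal phase-shift matrix and H = A H_tᴴ, the
achievable rate log₂ det(I + γ H F Fᴴ Hᴴ) is unchanged when F is replaced by its
orthogonal projection F₁ = H_t (H_tᴴH_t)⁻¹ H_tᴴ F onto the column space of H_t. -/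
theorem rate_unchanged_projection {J M N L Q : ℕ}
    (β : Fin M → ℝ)
    (D : Matrix (Fin M) (Fin M) ℂ)
    (hD : D = Matrix.diagonal (fun m => Complex.exp (Complex.I * (2 * Real.pi * β m))))
    (T : Matrix (Fin M) (Fin N) ℂ) (B : Matrix (Fin N) (Fin Q) ℂ)
    (Ht : Matrix (Fin M) (Fin L) ℂ) (A : Matrix (Fin J) (Fin L) ℂ)
    (hinv : IsUnit (Htᴴ * Ht))
    (H : Matrix (Fin J) (Fin M) ℂ) (hH : H = A * Htᴴ)
    (γ : ℝ) (hγ : 0 < γ)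
    (F F₁ : Matrix (Fin M) (Fin Q) ℂ) (hF : F = D * T * B)
    (hF₁ : F₁ = Ht * (Htᴴ * Ht)⁻¹ * Htᴴ * F) :
    Real.logb 2 ‖(1 + (γ : ℂ) • (H * F * Fᴴ * Hᴴ)).det‖
      = Real.logb 2 ‖(1 + (γ : ℂ) • (H * F₁ * F₁ᴴ * Hᴴ)).det‖ :=
  rate_unchanged_projection_general Ht A hinv H hH γ F F₁ hF₁
end
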